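/- arXiv:2105.14433 — 2 statements merged into one kernel-verified Lean document; each statement's English description precedes it below -/
import Mathlib

section
/- Suppose S, I, V : ℝ≥0 → ℝ are differentiable, satisfy the SIV system with delay τ ≥ 0 and positive parameters, have positive history on [−τ, 0], and suppose x > b. Let N(t) = S(t) + I(t+τ) + V(t+τ) and k = min(μ, μ₁). Then dN/dt ≤ ω − kN(t) for all t ≥ 0, and consequently limsup_{t→∞} N(t) ≤ ω/k. -/
theorem stmt_11 (ω β μ μ₁ b x y τ : ℝ)
    (hω : 0 < ω) (hβ : 0 < β) (hμ : 0 < μ) (hμ₁ : 0 < μ₁)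
    (hb : 0 < b) (hx : 0 < x) (hy : 0 < y) (hτ : 0 ≤ τ)
    (hxb : x > b)
    (S I V : ℝ → ℝ)
    (hSd : ∀ t ≥ 0, HasDerivAt S (ω - β * S t * V t - μ * S t) t)
    (hId : ∀ t ≥ 0, HasDerivAt I (β * S (t - τ) * V (t - τ) - (x + μ) * I t) t)
    (hVd : ∀ t ≥ 0, HasDerivAt V (b * I t - (y + μ₁) * V t) t)
    (hpos : ∀ t ≥ -τ, 0 < S t ∧ 0 < I t ∧ 0 < V t) :
    let N : ℝ → ℝ := fun t => S t + I (t + τ) + V (t + τ)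
    let k := min μ μ₁
    (∀ t ≥ 0, deriv N t ≤ ω - k * N t) ∧
    Filter.limsup N Filter.atTop ≤ ω / k := by
  intro N k
  have hk : 0 < k := lt_min hμ hμ₁
  have hkμ : k ≤ μ := min_le_left _ _
  have hkμ₁ : k ≤ μ₁ := min_le_right _ _
  -- derivative of N
  have hNd : ∀ t ≥ (0:ℝ), HasDerivAt N
      ((ω - β * S t * V t - μ * S t) + (β * S t * V t - (x + μ) * I (t + τ))
        + (b * I (t + τ) - (y + μ₁) * V (t + τ))) t := by
    intro t ht
    have h1 := hSd t ht
    have hshift : HasDerivAt (fun s : ℝ => s + τ) 1 t := (hasDerivAt_id t).add_const τ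
    have h2 : HasDerivAt (fun s => I (s + τ))
        (β * S t * V t - (x + μ) * I (t + τ)) t := by
      have h := (hId (t + τ) (by linarith)).comp t hshift
      simp only [add_sub_cancel_right, mul_one] at h; exact h
    have h3 : HasDerivAt (fun s => V (s + τ))
        (b * I (t + τ) - (y + μ₁) * V (t + τ)) t := by
      have h := (hVd (t + τ) (by linarith)).comp t hshift
      simp only [mul_one] at h; exact h
    exact (h1.add h2).add h3
  have key : ∀ t ≥ (0:ℝ), deriv N t ≤ ω - k * N t := by
    intro t ht
    have h := hNd t ht
    rw [h.deriv]
    have hS := (hpos t (by linarith)).1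
    have hI := (hpos (t + τ) (by linarith)).2.1
    have hV := (hpos (t + τ) (by linarith)).2.2
    have : N t = S t + I (t + τ) + V (t + τ) := rfl
    rw [this]
    nlinarith [mul_pos hβ (mul_pos hS hV)]
  refine ⟨key, ?_⟩
  set c := ω / k with hc
  set g : ℝ → ℝ := fun t => (N t - c) * Real.exp (k * t) with hg
  have hgd : ∀ t ≥ (0:ℝ), HasDerivAt g
      ((deriv N t) * Real.exp (k * t) + (N t - c) * (Real.exp (k * t) * (k * 1))) t := by
    intro t ht
    have hN : HasDerivAt N (deriv N t) t := (hNd t ht).differentiableAt.hasDerivAt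
    exact (hN.sub_const c).mul (((hasDerivAt_id t).const_mul k).exp)
  have hA : AntitoneOn g (Set.Ici (0:ℝ)) := by
    apply antitoneOn_of_deriv_nonpos (convex_Ici 0)
    · exact fun t ht => (hgd t ht).continuousAt.continuousWithinAt
    · intro t ht
      rw [interior_Ici] at ht
      exact ((hgd t (le_of_lt ht)).differentiableAt).differentiableWithinAt
    · intro t ht
      rw [interior_Ici] at ht
      have ht' : (0:ℝ) ≤ t := le_of_lt ht
      rw [(hgd t ht').deriv]
      have hd := key t ht'
      have he : 0 < Real.exp (k * t) := Real.exp_pos _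
      have hkc : k * c = ω := by rw [hc]; field_simp [hk.ne']
      nlinarith [mul_nonneg (sub_nonneg.mpr hd) he.le]
  have hbound : ∀ t ≥ (0:ℝ), N t ≤ c + (N 0 - c) * Real.exp (-(k * t)) := by
    intro t ht
    have h := hA (Set.self_mem_Ici) (Set.mem_Ici.mpr ht) ht
    have h0 : g 0 = N 0 - c := by simp [hg]
    have he : 0 < Real.exp (k * t) := Real.exp_pos _
    have h' : (N t - c) * Real.exp (k * t) ≤ N 0 - c := by
      rw [← h0]; exact h
    have : N t - c ≤ (N 0 - c) / Real.exp (k * t) := (le_div_iff₀ he).mpr h'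
    rw [div_eq_mul_inv, ← Real.exp_neg] at this
    linarith
  set F : ℝ → ℝ := fun t => c + (N 0 - c) * Real.exp (-(k * t)) with hF
  have hFt : Filter.Tendsto F Filter.atTop (nhds c) := by
    have h1 : Filter.Tendsto (fun t : ℝ => k * t) Filter.atTop Filter.atTop :=
      Filter.Tendsto.const_mul_atTop hk Filter.tendsto_id
    have h2 : Filter.Tendsto (fun t : ℝ => Real.exp (-(k * t))) Filter.atTop (nhds 0) :=
      Real.tendsto_exp_neg_atTop_nhds_zero.comp h1
    have h3 := (h2.const_mul (N 0 - c)).const_add c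
    simpa using h3
  have hle : ∀ᶠ t in Filter.atTop, N t ≤ F t :=
    Filter.eventually_atTop.mpr ⟨0, fun t ht => hbound t ht⟩
  have hcob : Filter.IsCoboundedUnder (· ≤ ·) Filter.atTop N := by
    apply Filter.isCoboundedUnder_le_of_eventually_le Filter.atTop (x := 0)
    refine Filter.eventually_atTop.mpr ⟨0, fun t ht => ?_⟩
    have hS := (hpos t (by linarith)).1
    have hI := (hpos (t + τ) (by linarith)).2.1
    have hV := (hpos (t + τ) (by linarith)).2.2
    have : N t = S t + I (t + τ) + V (t + τ) := rfl
    rw [this]; linarith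
  have hbd : Filter.IsBoundedUnder (· ≤ ·) Filter.atTop F := hFt.isBoundedUnder_le
  calc Filter.limsup N Filter.atTop ≤ Filter.limsup F Filter.atTop :=
        Filter.limsup_le_limsup hle hcob hbd
    _ = c := hFt.limsup_eq
end

section
/- Let λ = (λ₁, λ₂, λ₃) be a solution of the adjoint system on an interval B ⊂ [0,T], and suppose I(t) > 0 and V(t) > 0 on B. If the switching functions φ₁(t) = λ₂(t)I(t) and φ₂(t) = λ₃(t)V(t) vanish identically on B, then λ₂ ≡ 0 and λ₃ ≡ 0 on B, and furthermore the adjoint equation dλ₃/dt = λ₁βS + λ₃(μ₁+y+αμ₂₂) − (delay terms vanishing with λ₂, λ₃) forces λ₁ ≡ 0 on B, so the full adjoint vector vanishes on B. -/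
theorem stmt_18 (β μ₁ y α : ℝ) (hβ : 0 < β)
    (T a c : ℝ) (hac : a < c)
    (B : Set ℝ) (hB : B = Set.Ioo a c) (hBsub : B ⊆ Set.Icc 0 T)
    (lam₁ lam₂ lam₃ S I V u₂₂ : ℝ → ℝ)
    (hS : ∀ t ∈ B, 0 < S t)
    (hI : ∀ t ∈ B, 0 < I t)
    (hV : ∀ t ∈ B, 0 < V t)
    (hadj₃ : ∀ t ∈ B, HasDerivAt lam₃
      (lam₁ t * β * S t + lam₃ t * (μ₁ + y + α * u₂₂ t)) t)
    (hφ₁ : ∀ t ∈ B, lam₂ t * I t = 0)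
    (hφ₂ : ∀ t ∈ B, lam₃ t * V t = 0) :
    ∀ t ∈ B, lam₂ t = 0 ∧ lam₃ t = 0 ∧ lam₁ t = 0 := by
  have h3 : ∀ t ∈ B, lam₃ t = 0 := fun t ht => by
    have := hφ₂ t ht
    have hVt := (hV t ht).ne'
    exact (mul_eq_zero.1 this).resolve_right hVt
  intro t ht
  refine ⟨?_, h3 t ht, ?_⟩
  · have := hφ₁ t ht
    exact (mul_eq_zero.1 this).resolve_right (hI t ht).ne'
  · -- lam₃ = 0 on open nbhd, so derivative 0
    have hopen : IsOpen B := hB ▸ isOpen_Ioo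
    have hev : lam₃ =ᶠ[nhds t] (fun _ => (0:ℝ)) :=
      Filter.eventuallyEq_of_mem (hopen.mem_nhds ht) h3
    have hd0 : HasDerivAt lam₃ 0 t := (hasDerivAt_const t (0:ℝ)).congr_of_eventuallyEq hev
    have := (hadj₃ t ht).unique hd0
    rw [h3 t ht, zero_mul, add_zero] at this
    have hSt := (hS t ht).ne'
    have : lam₁ t * β = 0 := by
      rcases mul_eq_zero.1 this with h | h
      · exact h
      · exact absurd h hSt
    exact (mul_eq_zero.1 this).resolve_right hβ.ne'
end
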